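/- arXiv:2502.10030 — 3 statements merged into one kernel-verified Lean document; each statement's English description precedes it below -/
import Mathlib

section
/- If two beliefs β (a density matrix on S⊗R₁) and γ (a density matrix on S⊗R₂) are equivalent, then their marginals on S coincide: Tr_{R₁}[β] = Tr_{R₂}[γ]. -/
open Matrix
open scoped Kronecker ComplexOrder

open Classical in
/-- The positive semidefinite square root of a matrix (zero if not PSD). -/
noncomputable def msqrt {n : Type*} [Fintype n] [DecidableEq n] (A : Matrix n n ℂ) :
    Matrix n n ℂ :=
  if h : A.PosSemidef then
    h.1.eigenvectorUnitary.1 * diagonal ((↑) ∘ (√·) ∘ h.1.eigenvalues) *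
      (star h.1.eigenvectorUnitary : Matrix n n ℂ) else 0

/-- `A^{-1/2}`: the (nonsingular) inverse of the PSD square root. -/
noncomputable def invsqrt {n : Type*} [Fintype n] [DecidableEq n] (A : Matrix n n ℂ) :
    Matrix n n ℂ :=
  (msqrt A)⁻¹

/-- Partial trace over the second factor `R`. -/
noncomputable def ptraceR {S R : Type*} [Fintype R] (M : Matrix (S × R) (S × R) ℂ) : Matrix S S ℂ :=
  Matrix.of fun s s' => ∑ r, M (s, r) (s', r)

/-- A density matrix: positive semidefinite with unit trace. -/
def IsDensity {n : Type*} [Fintype n] (A : Matrix n n ℂ) : Prop :=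
  A.PosSemidef ∧ A.trace = 1

/-- The Choi matrix of a linear map between matrix algebras. -/
def choi {S T : Type*} [Fintype S] [DecidableEq S]
    (E : Matrix S S ℂ →ₗ[ℂ] Matrix T T ℂ) : Matrix (S × T) (S × T) ℂ :=
  Matrix.of fun p q => E (Matrix.single p.1 q.1 1) p.2 q.2

/-- Completely positive trace-preserving map. -/
def IsCPTP {S T : Type*} [Fintype S] [DecidableEq S] [Fintype T]
    (E : Matrix S S ℂ →ₗ[ℂ] Matrix T T ℂ) : Prop :=
  (∀ X, (E X).trace = X.trace) ∧ (choi E).PosSemidef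

/-- The Hilbert-Schmidt adjoint `E†`, satisfying `Tr[E(X)† Y] = Tr[X† E†(Y)]`. -/
noncomputable def adjMap {S T : Type*} [Fintype S] [DecidableEq S] [Fintype T]
    (E : Matrix S S ℂ →ₗ[ℂ] Matrix T T ℂ) (Y : Matrix T T ℂ) : Matrix S S ℂ :=
  Matrix.of fun i j => ((E (Matrix.single i j 1))ᴴ * Y).trace

/-- The original Petz map `R^{E,βS}(σ) = √βS E†(E(βS)^{-1/2} σ E(βS)^{-1/2}) √βS`. -/
noncomputable def petz {S T : Type*} [Fintype S] [DecidableEq S] [Fintype T] [DecidableEq T]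
    (E : Matrix S S ℂ →ₗ[ℂ] Matrix T T ℂ) (βS : Matrix S S ℂ) (σ : Matrix T T ℂ) :
    Matrix S S ℂ :=
  msqrt βS * adjMap E (invsqrt (E βS) * σ * invsqrt (E βS)) * msqrt βS

/-- The prior-extended Petz map `R^{E⊗Tr,β}`. -/
noncomputable def petzExt {S R T : Type*} [Fintype S] [DecidableEq S]
    [Fintype R] [DecidableEq R] [Fintype T] [DecidableEq T]
    (E : Matrix S S ℂ →ₗ[ℂ] Matrix T T ℂ) (β : Matrix (S × R) (S × R) ℂ)
    (σ : Matrix T T ℂ) : Matrix (S × R) (S × R) ℂ :=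
  msqrt β *
    (adjMap E (invsqrt (E (ptraceR β)) * σ * invsqrt (E (ptraceR β))) ⊗ₖ (1 : Matrix R R ℂ)) *
    msqrt β

/-- The retrodiction map `R_ext^{E,β} = Tr_R ∘ R^{E⊗Tr,β}`. -/
noncomputable def retroExt {S R T : Type*} [Fintype S] [DecidableEq S]
    [Fintype R] [DecidableEq R] [Fintype T] [DecidableEq T]
    (E : Matrix S S ℂ →ₗ[ℂ] Matrix T T ℂ) (β : Matrix (S × R) (S × R) ℂ)
    (σ : Matrix T T ℂ) : Matrix S S ℂ :=
  ptraceR (petzExt E β σ)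

/-- Two beliefs are equivalent if they induce the same retrodiction map for all channels. -/
def EquivBeliefs {S R₁ R₂ : Type*} [Fintype S] [DecidableEq S]
    [Fintype R₁] [DecidableEq R₁] [Fintype R₂] [DecidableEq R₂]
    (β : Matrix (S × R₁) (S × R₁) ℂ) (γ : Matrix (S × R₂) (S × R₂) ℂ) : Prop :=
  ∀ (T : Type) (_ : Fintype T) (_ : DecidableEq T)
    (E : Matrix S S ℂ →ₗ[ℂ] Matrix T T ℂ),
    IsCPTP E → (E (ptraceR β)).PosDef → (E (ptraceR γ)).PosDef →
    ∀ σ : Matrix T T ℂ, retroExt E β σ = retroExt E γ σ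

/-! The Petz retrodiction of the prior's own image returns the prior: a trace-preserving `E`
has `E† 1 = 1`, so `R_ext^{E,β}(E(β_S)) = Tr_R[√β √β] = β_S`. For the trace channel onto a
one-dimensional system, `E(β_S) = E(γ_S) = 1` since both beliefs have unit trace, so equivalence
of `β` and `γ` at `σ = 1` gives `β_S = γ_S`. -/

lemma msqrt_mul_self {n : Type*} [Fintype n] [DecidableEq n] {A : Matrix n n ℂ}
    (hA : A.PosSemidef) : msqrt A * msqrt A = A := by
  set U : Matrix n n ℂ := (hA.1.eigenvectorUnitary : Matrix n n ℂ)
  have hU : star U * U = 1 := Unitary.coe_star_mul_self _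
  have hsq : diagonal (((↑) : ℝ → ℂ) ∘ (√·) ∘ hA.1.eigenvalues) *
      diagonal ((↑) ∘ (√·) ∘ hA.1.eigenvalues) = diagonal (RCLike.ofReal ∘ hA.1.eigenvalues) := by
    rw [diagonal_mul_diagonal]
    congr 1
    funext i
    simp only [Function.comp_apply, ← Complex.ofReal_mul,
      Real.mul_self_sqrt (hA.eigenvalues_nonneg i)]
    rfl
  conv_rhs => rw [hA.1.spectral_theorem, Unitary.conjStarAlgAut_apply]
  simp only [msqrt, dif_pos hA]
  rw [← hsq]
  simp only [Matrix.mul_assoc]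
  rw [← Matrix.mul_assoc (star U) U, hU, Matrix.one_mul]

lemma invsqrt_mul_mul_invsqrt {n : Type*} [Fintype n] [DecidableEq n] {A : Matrix n n ℂ}
    (hA : A.PosDef) : invsqrt A * A * invsqrt A = 1 := by
  have hsq := msqrt_mul_self hA.posSemidef
  have hdet : IsUnit (msqrt A).det := by
    have : IsUnit A.det := hA.isUnit.map Matrix.detMonoidHom
    rw [← hsq, det_mul] at this
    exact isUnit_of_mul_isUnit_left this
  calc invsqrt A * A * invsqrt A
      = (msqrt A)⁻¹ * (msqrt A * msqrt A) * (msqrt A)⁻¹ := by rw [hsq, invsqrt]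
    _ = ((msqrt A)⁻¹ * msqrt A) * (msqrt A * (msqrt A)⁻¹) := by simp only [Matrix.mul_assoc]
    _ = 1 := by rw [nonsing_inv_mul _ hdet, mul_nonsing_inv _ hdet, Matrix.one_mul]

lemma adjMap_one {S T : Type*} [Fintype S] [DecidableEq S] [Fintype T] [DecidableEq T]
    {E : Matrix S S ℂ →ₗ[ℂ] Matrix T T ℂ} (hE : ∀ X, (E X).trace = X.trace) :
    adjMap E 1 = 1 := by
  ext i j
  rw [adjMap, of_apply, Matrix.mul_one, trace_conjTranspose, hE, one_apply]
  split_ifs with hij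
  · rw [hij, trace_single_eq_same, star_one]
  · rw [trace_single_eq_of_ne _ _ _ hij, star_zero]

lemma trace_ptraceR {S R : Type*} [Fintype S] [Fintype R]
    (M : Matrix (S × R) (S × R) ℂ) : (ptraceR M).trace = M.trace := by
  simp [ptraceR, Matrix.trace, Fintype.sum_prod_type]

theorem retroExt_apply_marginal {S R T : Type*} [Fintype S] [DecidableEq S]
    [Fintype R] [DecidableEq R] [Fintype T] [DecidableEq T]
    {E : Matrix S S ℂ →ₗ[ℂ] Matrix T T ℂ} (hE : ∀ X, (E X).trace = X.trace)
    {β : Matrix (S × R) (S × R) ℂ} (hβ : β.PosSemidef) (hEβ : (E (ptraceR β)).PosDef) :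
    retroExt E β (E (ptraceR β)) = ptraceR β := by
  rw [retroExt, petzExt, invsqrt_mul_mul_invsqrt hEβ, adjMap_one hE, one_kronecker_one,
    Matrix.mul_one, msqrt_mul_self hβ]

noncomputable def traceChannel (S : Type*) [Fintype S] : Matrix S S ℂ →ₗ[ℂ] Matrix Unit Unit ℂ :=
  (traceLinearMap S ℂ ℂ).smulRight 1

lemma traceChannel_apply {S : Type*} [Fintype S] (X : Matrix S S ℂ) :
    traceChannel S X = X.trace • 1 := rfl

lemma choi_traceChannel (S : Type*) [Fintype S] [DecidableEq S] : choi (traceChannel S) = 1 := by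
  ext ⟨i, _⟩ ⟨j, _⟩
  simp only [choi, of_apply, traceChannel_apply, Matrix.smul_apply, one_apply_eq, smul_eq_mul,
    mul_one]
  by_cases hij : i = j
  · subst hij; rw [trace_single_eq_same, one_apply_eq]
  · rw [trace_single_eq_of_ne _ _ _ hij, one_apply_ne (by simp [hij])]

lemma isCPTP_traceChannel (S : Type*) [Fintype S] [DecidableEq S] : IsCPTP (traceChannel S) :=
  ⟨fun X => by simp [traceChannel_apply], choi_traceChannel S ▸ PosSemidef.one⟩

lemma traceChannel_ptraceR_of_isDensity {S R : Type*} [Fintype S] [Fintype R]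
    {β : Matrix (S × R) (S × R) ℂ} (hβ : IsDensity β) : traceChannel S (ptraceR β) = 1 := by
  rw [traceChannel_apply, trace_ptraceR, hβ.2, one_smul]

lemma posDef_traceChannel_ptraceR {S R : Type*} [Fintype S] [Fintype R]
    {β : Matrix (S × R) (S × R) ℂ} (hβ : IsDensity β) : (traceChannel S (ptraceR β)).PosDef :=
  traceChannel_ptraceR_of_isDensity hβ ▸ PosDef.one

lemma retroExt_traceChannel_one {S R : Type*} [Fintype S] [DecidableEq S]
    [Fintype R] [DecidableEq R] {β : Matrix (S × R) (S × R) ℂ} (hβ : IsDensity β) :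
    retroExt (traceChannel S) β 1 = ptraceR β := by
  simpa only [traceChannel_ptraceR_of_isDensity hβ] using
    retroExt_apply_marginal (isCPTP_traceChannel S).1 hβ.1 (posDef_traceChannel_ptraceR hβ)

/-- Equivalent beliefs have equal marginals on `S`. -/
theorem equiv_beliefs_marginals_eq
    {S R₁ R₂ : Type*} [Fintype S] [DecidableEq S]
    [Fintype R₁] [DecidableEq R₁] [Fintype R₂] [DecidableEq R₂]
    (β : Matrix (S × R₁) (S × R₁) ℂ) (γ : Matrix (S × R₂) (S × R₂) ℂ)
    (hβ : IsDensity β) (hγ : IsDensity γ)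
    (h : EquivBeliefs β γ) :
    ptraceR β = ptraceR γ := by
  have key := h Unit inferInstance inferInstance (traceChannel S) (isCPTP_traceChannel S)
    (posDef_traceChannel_ptraceR hβ) (posDef_traceChannel_ptraceR hγ) 1
  rwa [retroExt_traceChannel_one hβ, retroExt_traceChannel_one hγ] at key
end

section
/- For any belief β (a density matrix on S⊗R₁) and any density matrix σ on a further system R₂, the beliefs β (on S with reference system R₁) and β⊗σ (on S with reference system R₁⊗R₂) are equivalent. -/
open Matrix
open scoped Kronecker ComplexOrder


/-! The square root factorises, `√(β ⊗ σ) = √β ⊗ √σ`, and `Tr σ = 1` makes the `S`-marginal of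
`β ⊗ σ` equal to that of `β`. Hence the prior-extended Petz map of `β ⊗ σ` is the one of `β`
tensored with `σ`, and tracing out `R₁ ⊗ R₂` produces `Tr σ = 1` times the retrodiction of `β`. -/

section msqrt

open scoped MatrixOrder

variable {n p : Type*} [Fintype n] [DecidableEq n] [Fintype p] [DecidableEq p]

theorem msqrt_eq_cfcSqrt {A : Matrix n n ℂ} (hA : A.PosSemidef) : msqrt A = CFC.sqrt A := by
  rw [CFC.sqrt_eq_real_sqrt A hA.nonneg, cfcₙ_eq_cfc, hA.1.cfc_eq, msqrt, dif_pos hA]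
  rfl

theorem posSemidef_msqrt {A : Matrix n n ℂ} (hA : A.PosSemidef) : (msqrt A).PosSemidef := by
  rw [msqrt_eq_cfcSqrt hA, ← nonneg_iff_posSemidef]
  exact CFC.sqrt_nonneg A

theorem msqrt_mul_msqrt_self {A : Matrix n n ℂ} (hA : A.PosSemidef) :
    msqrt A * msqrt A = A := by
  rw [msqrt_eq_cfcSqrt hA]
  exact CFC.sqrt_mul_sqrt_self A hA.nonneg

theorem msqrt_mul_self_s4 {B : Matrix n n ℂ} (hB : B.PosSemidef) : msqrt (B * B) = B := by
  have hBB : (B * B).PosSemidef := by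
    simpa only [hB.1.eq] using posSemidef_conjTranspose_mul_self B
  rw [msqrt_eq_cfcSqrt hBB]
  exact CFC.sqrt_mul_self B hB.nonneg

theorem msqrt_kronecker {A : Matrix n n ℂ} {B : Matrix p p ℂ}
    (hA : A.PosSemidef) (hB : B.PosSemidef) : msqrt (A ⊗ₖ B) = msqrt A ⊗ₖ msqrt B := by
  conv_lhs => rw [← msqrt_mul_msqrt_self hA, ← msqrt_mul_msqrt_self hB, mul_kronecker_mul]
  exact msqrt_mul_self_s4 ((posSemidef_msqrt hA).kronecker (posSemidef_msqrt hB))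

theorem msqrt_reindex (e : p ≃ n) {A : Matrix p p ℂ} (hA : A.PosSemidef) :
    msqrt (reindex e e A) = reindex e e (msqrt A) := by
  have hsq : reindex e e A = reindex e e (msqrt A) * reindex e e (msqrt A) := by
    simp [msqrt_mul_msqrt_self hA]
  rw [hsq]
  exact msqrt_mul_self_s4 ((posSemidef_msqrt hA).submatrix e.symm)

end msqrt

theorem ptraceR_reindex_prodAssoc_kronecker {S R₁ R₂ : Type*} [Fintype R₁] [Fintype R₂]
    (M : Matrix (S × R₁) (S × R₁) ℂ) (N : Matrix R₂ R₂ ℂ) :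
    ptraceR (reindex (Equiv.prodAssoc S R₁ R₂) (Equiv.prodAssoc S R₁ R₂) (M ⊗ₖ N)) =
      N.trace • ptraceR M := by
  ext s s'
  simp only [ptraceR, of_apply, reindex_apply, submatrix_apply, Equiv.prodAssoc_symm_apply,
    kroneckerMap_apply, Matrix.smul_apply, trace, diag_apply, smul_eq_mul, Fintype.sum_prod_type,
    ← Finset.sum_mul_sum]
  exact mul_comm _ _

theorem petzExt_reindex_prodAssoc_kronecker {S R₁ R₂ T : Type*} [Fintype S] [DecidableEq S]
    [Fintype R₁] [DecidableEq R₁] [Fintype R₂] [DecidableEq R₂] [Fintype T] [DecidableEq T]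
    (E : Matrix S S ℂ →ₗ[ℂ] Matrix T T ℂ) {β : Matrix (S × R₁) (S × R₁) ℂ}
    {σ : Matrix R₂ R₂ ℂ} (hβ : β.PosSemidef) (hσ : IsDensity σ) (τ : Matrix T T ℂ) :
    petzExt E (reindex (Equiv.prodAssoc S R₁ R₂) (Equiv.prodAssoc S R₁ R₂) (β ⊗ₖ σ)) τ =
      reindex (Equiv.prodAssoc S R₁ R₂) (Equiv.prodAssoc S R₁ R₂) (petzExt E β τ ⊗ₖ σ) := by
  rw [petzExt, petzExt, ptraceR_reindex_prodAssoc_kronecker, hσ.2, one_smul,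
    msqrt_reindex _ (hβ.kronecker hσ.1), msqrt_kronecker hβ hσ.1, ← one_kronecker_one,
    ← kronecker_assoc]
  simp only [reindex_apply, submatrix_mul_equiv]
  rw [← mul_kronecker_mul, ← mul_kronecker_mul, mul_one, msqrt_mul_msqrt_self hσ.1]

/-- Adjoining an uncorrelated additional system `R₂` in state `σ`
yields an equivalent belief. -/
theorem tensor_uncorrelated_equiv
    {S R₁ R₂ : Type*} [Fintype S] [DecidableEq S]
    [Fintype R₁] [DecidableEq R₁] [Fintype R₂] [DecidableEq R₂]
    (β : Matrix (S × R₁) (S × R₁) ℂ) (σ : Matrix R₂ R₂ ℂ)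
    (hβ : IsDensity β) (hσ : IsDensity σ) :
    EquivBeliefs β
      ((Matrix.reindex (Equiv.prodAssoc S R₁ R₂) (Equiv.prodAssoc S R₁ R₂)) (β ⊗ₖ σ)) := by
  intro T _ _ E _ _ _ τ
  rw [retroExt, retroExt, petzExt_reindex_prodAssoc_kronecker E hβ.1 hσ,
    ptraceR_reindex_prodAssoc_kronecker, hσ.2, one_smul]
end

section
/- Certainty is immune to updates: let β = |Ψ⟩⟨Ψ| be a pure belief on S⊗R (|Ψ⟩ a unit vector), with marginal β_S := Tr_R[β]. Then for every CPTP map E from S to T with E(β_S) positive definite and every density matrix σ on T, the prior-extended Petz map returns the prior: R^{E⊗Tr,β}(σ) = β, and consequently the retrodiction map satisfies R_ext^{E,β}(σ) = β_S. -/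
open Matrix
open scoped Kronecker ComplexOrder


/-!
For a unit vector `Ψ`, the belief `β = |Ψ⟩⟨Ψ|` is a rank-one projection, so `√β = β` and every
sandwich `β X β` collapses to `Tr[X β] • β`. For `X = E†(Y) ⊗ 1` with
`Y = E(β_S)^{-1/2} σ E(β_S)^{-1/2}` the weight is `Tr[E†(Y) β_S] = Tr[Y E(β_S)] = Tr σ = 1`,
by duality of `E†` and the cancellation of the two inverse square roots.
-/

open scoped MatrixOrder

namespace Matrix

variable {n : Type*} [Fintype n]

theorem PosSemidef.msqrt_eq_sqrt [DecidableEq n] {A : Matrix n n ℂ} (hA : A.PosSemidef) :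
    msqrt A = CFC.sqrt A := by
  rw [CFC.sqrt_eq_real_sqrt A hA.nonneg, cfcₙ_eq_cfc, msqrt, dif_pos hA, hA.1.cfc_eq,
    IsHermitian.cfc, Unitary.conjStarAlgAut_apply]
  rfl

theorem PosSemidef.msqrt_mul_msqrt [DecidableEq n] {A : Matrix n n ℂ} (hA : A.PosSemidef) :
    msqrt A * msqrt A = A := by
  rw [hA.msqrt_eq_sqrt]
  exact CFC.sqrt_mul_sqrt_self A hA.nonneg

theorem PosSemidef.msqrt_eq_self_of_mul_self [DecidableEq n] {A : Matrix n n ℂ}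
    (hA : A.PosSemidef) (h : A * A = A) : msqrt A = A := by
  rw [hA.msqrt_eq_sqrt]
  exact CFC.sqrt_unique h hA.nonneg

theorem PosDef.invsqrt_mul_mul_invsqrt [DecidableEq n] {A : Matrix n n ℂ} (hA : A.PosDef) :
    invsqrt A * A * invsqrt A = 1 := by
  have hunit : IsUnit (msqrt A) := by
    rw [hA.posSemidef.msqrt_eq_sqrt, CFC.isUnit_sqrt_iff A hA.posSemidef.nonneg]
    exact hA.isUnit
  have hdet : IsUnit (msqrt A).det := (isUnit_iff_isUnit_det _).mp hunit
  calc invsqrt A * A * invsqrt A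
      = (msqrt A)⁻¹ * (msqrt A * msqrt A) * (msqrt A)⁻¹ := by
        rw [hA.posSemidef.msqrt_mul_msqrt, invsqrt]
    _ = ((msqrt A)⁻¹ * msqrt A) * (msqrt A * (msqrt A)⁻¹) := by simp only [mul_assoc]
    _ = 1 := by rw [nonsing_inv_mul _ hdet, mul_nonsing_inv _ hdet, one_mul]

theorem trace_invsqrt_mul_mul_invsqrt_mul [DecidableEq n] {A : Matrix n n ℂ} (hA : A.PosDef)
    (σ : Matrix n n ℂ) : (invsqrt A * σ * invsqrt A * A).trace = σ.trace := by
  rw [show invsqrt A * σ * invsqrt A * A = invsqrt A * (σ * (invsqrt A * A)) by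
      simp only [mul_assoc], trace_mul_comm, mul_assoc, hA.invsqrt_mul_mul_invsqrt, mul_one]

theorem dotProduct_star_self_eq_one {u : n → ℂ} (hu : ∑ i, Complex.normSq (u i) = 1) :
    star u ⬝ᵥ u = 1 := by
  simp only [dotProduct, Pi.star_apply, RCLike.star_def, ← Complex.normSq_eq_conj_mul_self]
  exact_mod_cast hu

theorem vecMulVec_star_self_mul_self {u : n → ℂ} (hu : star u ⬝ᵥ u = 1) :
    vecMulVec u (star u) * vecMulVec u (star u) = vecMulVec u (star u) := by
  rw [vecMulVec_mul_vecMulVec, hu, one_smul]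

theorem vecMulVec_mul_mul_vecMulVec {α : Type*} [CommSemiring α] (u v : n → α)
    (M : Matrix n n α) :
    vecMulVec u v * M * vecMulVec u v = (M * vecMulVec u v).trace • vecMulVec u v := by
  rw [vecMulVec_mul, vecMulVec_mul_vecMulVec, mul_vecMulVec, trace_vecMulVec, vecMulVec_smul,
    ← dotProduct_mulVec, dotProduct_comm]

end Matrix

theorem ptraceR_conjTranspose {S R : Type*} [Fintype R] (M : Matrix (S × R) (S × R) ℂ) :
    ptraceR Mᴴ = (ptraceR M)ᴴ := by
  ext s s'
  simp [ptraceR, conjTranspose_apply]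

theorem trace_mul_ptraceR {S R : Type*} [Fintype S] [Fintype R] [DecidableEq R]
    (A : Matrix S S ℂ) (M : Matrix (S × R) (S × R) ℂ) :
    (A * ptraceR M).trace = ((A ⊗ₖ (1 : Matrix R R ℂ)) * M).trace := by
  simp only [trace, ptraceR, diag_apply, mul_apply, of_apply, Finset.mul_sum, kroneckerMap_apply,
    one_apply, mul_ite, mul_one, mul_zero, ite_mul, zero_mul, Fintype.sum_prod_type,
    Finset.sum_ite_eq, Finset.mem_univ, ↓reduceIte]
  exact Finset.sum_congr rfl fun s _ => Finset.sum_comm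

theorem trace_conjTranspose_mul_adjMap {S T : Type*} [Fintype S] [DecidableEq S] [Fintype T]
    (E : Matrix S S ℂ →ₗ[ℂ] Matrix T T ℂ) (X : Matrix S S ℂ) (Y : Matrix T T ℂ) :
    (Xᴴ * adjMap E Y).trace = ((E X)ᴴ * Y).trace := by
  have hEX : E X = ∑ i, ∑ j, X i j • E (single i j 1) := by
    conv_lhs => rw [matrix_eq_sum_single X]
    simp only [map_sum, ← map_smul, smul_single, smul_eq_mul, mul_one]
  simp only [hEX, conjTranspose_sum, conjTranspose_smul, Finset.sum_mul, smul_mul_assoc,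
    trace_sum, trace_smul, smul_eq_mul, RCLike.star_def]
  simp only [trace, diag, mul_apply, adjMap, of_apply, conjTranspose_apply, RCLike.star_def]
  exact Finset.sum_comm

theorem pure_belief_immune_to_update_general
    {S R T : Type*} [Fintype S] [DecidableEq S]
    [Fintype R] [DecidableEq R] [Fintype T] [DecidableEq T]
    (Ψ : S × R → ℂ) (hΨ : ∑ p, Complex.normSq (Ψ p) = 1)
    (E : Matrix S S ℂ →ₗ[ℂ] Matrix T T ℂ)
    (hpd : (E (ptraceR (Matrix.vecMulVec Ψ (star Ψ)))).PosDef)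
    (σ : Matrix T T ℂ) (hσ : IsDensity σ) :
    petzExt E (Matrix.vecMulVec Ψ (star Ψ)) σ = Matrix.vecMulVec Ψ (star Ψ) ∧
      retroExt E (Matrix.vecMulVec Ψ (star Ψ)) σ
        = ptraceR (Matrix.vecMulVec Ψ (star Ψ)) := by
  set β := vecMulVec Ψ (star Ψ)
  have hβ : β.PosSemidef := posSemidef_vecMulVec_self_star Ψ
  have hsqrt : msqrt β = β :=
    hβ.msqrt_eq_self_of_mul_self (vecMulVec_star_self_mul_self (dotProduct_star_self_eq_one hΨ))
  set Y := invsqrt (E (ptraceR β)) * σ * invsqrt (E (ptraceR β))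
  have hweight : (adjMap E Y * ptraceR β).trace = 1 :=
    calc (adjMap E Y * ptraceR β).trace = ((ptraceR β)ᴴ * adjMap E Y).trace := by
          rw [← ptraceR_conjTranspose, hβ.isHermitian.eq, trace_mul_comm]
      _ = (Y * E (ptraceR β)).trace := by
          rw [trace_conjTranspose_mul_adjMap, hpd.isHermitian.eq, trace_mul_comm]
      _ = σ.trace := trace_invsqrt_mul_mul_invsqrt_mul hpd σ
      _ = 1 := hσ.2
  have hpetz : petzExt E β σ = β := by
    rw [petzExt, hsqrt, vecMulVec_mul_mul_vecMulVec, ← trace_mul_ptraceR, hweight, one_smul]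
  exact ⟨hpetz, by rw [retroExt, hpetz]⟩

/-- Certainty is immune to updates: for a pure belief
`β = |Ψ⟩⟨Ψ|`, the prior-extended Petz map returns the prior, and the
retrodiction map returns the marginal `β_S`. -/
theorem pure_belief_immune_to_update
    {S R T : Type*} [Fintype S] [DecidableEq S]
    [Fintype R] [DecidableEq R] [Fintype T] [DecidableEq T]
    (Ψ : S × R → ℂ) (hΨ : ∑ p, Complex.normSq (Ψ p) = 1)
    (E : Matrix S S ℂ →ₗ[ℂ] Matrix T T ℂ) (hE : IsCPTP E)
    (hpd : (E (ptraceR (Matrix.vecMulVec Ψ (star Ψ)))).PosDef)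
    (σ : Matrix T T ℂ) (hσ : IsDensity σ) :
    petzExt E (Matrix.vecMulVec Ψ (star Ψ)) σ = Matrix.vecMulVec Ψ (star Ψ) ∧
      retroExt E (Matrix.vecMulVec Ψ (star Ψ)) σ
        = ptraceR (Matrix.vecMulVec Ψ (star Ψ)) :=
  pure_belief_immune_to_update_general Ψ hΨ E hpd σ hσ
end
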